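/- Intermediate Cramér–Rao inequality: under the same hypotheses, E_{θ₀}[T²] ≥ (γ'_T(θ₀))² / I(θ₀) whenever I(θ₀) > 0. -/

import Mathlib

open MeasureTheory Filter Topology Set

/-! Since `T² f_{θ₀} = (√f_{θ₀} · T)²`, the inequality is Cauchy–Schwarz in `L²(μ)` for `D` and
`√f_{θ₀} · T`; the latter lies in `L²` because `√f_{θ₀}` does and `T` is essentially bounded. -/

section L2

variable {X : Type*} [MeasurableSpace X] {μ : Measure X}

theorem integral_mul_sq_le_of_memLp_two {a b : X → ℝ} (ha : MemLp a 2 μ) (hb : MemLp b 2 μ) :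
    (∫ x, a x * b x ∂μ) ^ 2 ≤ (∫ x, a x ^ 2 ∂μ) * ∫ x, b x ^ 2 ∂μ := by
  have inner_toLp {g h : X → ℝ} (hg : MemLp g 2 μ) (hh : MemLp h 2 μ) :
      inner ℝ (hg.toLp g) (hh.toLp h) = ∫ x, g x * h x ∂μ := by
    rw [L2.inner_def]
    refine integral_congr_ae ?_
    filter_upwards [hg.coeFn_toLp, hh.coeFn_toLp] with x hgx hhx
    simp [hgx, hhx, mul_comm]
  have := real_inner_mul_inner_self_le (ha.toLp a) (hb.toLp b)
  simpa only [inner_toLp, sq] using this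

theorem sq_integral_mul_div_le_of_memLp_two {a b : X → ℝ} (ha : MemLp a 2 μ)
    (hb : MemLp b 2 μ) :
    (∫ x, a x * b x ∂μ) ^ 2 / ∫ x, a x ^ 2 ∂μ ≤ ∫ x, b x ^ 2 ∂μ := by
  rcases (integral_nonneg fun x => by positivity : 0 ≤ ∫ x, a x ^ 2 ∂μ).eq_or_lt with ha0 | ha0
  · rw [← ha0, div_zero]
    exact integral_nonneg fun x => by positivity
  · rw [div_le_iff₀ ha0, mul_comm]
    exact integral_mul_sq_le_of_memLp_two ha hb

theorem MeasureTheory.Integrable.memLp_two_sqrt {f : X → ℝ} (hf : Integrable f μ) (hf_nonneg : 0 ≤ᵐ[μ] f) :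
    MemLp (fun x => √(f x)) 2 μ := by
  rw [memLp_two_iff_integrable_sq (Real.continuous_sqrt.comp_aestronglyMeasurable hf.1)]
  refine hf.congr ?_
  filter_upwards [hf_nonneg] with x hx
  exact (Real.sq_sqrt hx).symm

end L2

theorem stmt_4_general {X : Type*} [MeasurableSpace X] (μ : Measure X)
    (Θ : Set ℝ) (θ₀ : ℝ) (hθ₀ : θ₀ ∈ Θ)
    (f : ℝ → X → ℝ)
    (hf_nonneg : ∀ θ x, 0 ≤ f θ x)
    (hf_prob : ∀ θ ∈ Θ, ∫ x, f θ x ∂μ = 1)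
    (D : X → ℝ) (hD : MemLp D 2 μ)
    (T : X → ℝ) (hT_meas : Measurable T) (M : ℝ) (hT : ∀ᵐ x ∂μ, |T x| ≤ M) :
    (∫ x, T x ^ 2 * f θ₀ x ∂μ)
      ≥ (2 * ∫ x, D x * Real.sqrt (f θ₀ x) * T x ∂μ) ^ 2
        / (4 * ∫ x, D x ^ 2 ∂μ) := by
  have hf_int : Integrable (f θ₀) μ :=
    Integrable.of_integral_ne_zero (by rw [hf_prob θ₀ hθ₀]; exact one_ne_zero)
  have hT_top : MemLp T ⊤ μ :=
    memLp_top_of_bound hT_meas.aestronglyMeasurable M (by simpa only [Real.norm_eq_abs] using hT)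
  have hsqrtT : MemLp (fun x => √(f θ₀ x) * T x) 2 μ :=
    hT_top.mul' (hf_int.memLp_two_sqrt (.of_forall (hf_nonneg θ₀)))
  have hcs := sq_integral_mul_div_le_of_memLp_two hD hsqrtT
  have hsq : ∀ x, (√(f θ₀ x) * T x) ^ 2 = T x ^ 2 * f θ₀ x := fun x => by
    rw [mul_pow, Real.sq_sqrt (hf_nonneg θ₀ x), mul_comm]
  simp only [hsq, ← mul_assoc] at hcs
  calc (2 * ∫ x, D x * √(f θ₀ x) * T x ∂μ) ^ 2 / (4 * ∫ x, D x ^ 2 ∂μ)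
      = (∫ x, D x * √(f θ₀ x) * T x ∂μ) ^ 2 / ∫ x, D x ^ 2 ∂μ := by ring
    _ ≤ ∫ x, T x ^ 2 * f θ₀ x ∂μ := hcs

/-- intermediate Cramér–Rao inequality: under the same hypotheses,
`E_{θ₀}[T²] ≥ (γ'_T(θ₀))² / I(θ₀)` whenever `I(θ₀) > 0`, where
`γ'_T(θ₀) = 2 ∫ ξ̇_{θ₀} ξ_{θ₀} T dμ`. -/
theorem stmt_4 {X : Type*} [MeasurableSpace X] (μ : Measure X) [SigmaFinite μ]
    (Θ : Set ℝ) (hΘ : IsOpen Θ) (θ₀ : ℝ) (hθ₀ : θ₀ ∈ Θ)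
    (f : ℝ → X → ℝ)
    (hf_meas : Measurable (Function.uncurry f))
    (hf_nonneg : ∀ θ x, 0 ≤ f θ x)
    (hf_prob : ∀ θ ∈ Θ, ∫ x, f θ x ∂μ = 1)
    (D : X → ℝ) (hD : MemLp D 2 μ)
    (hdiff : Tendsto
      (fun θ => (∫ x, (Real.sqrt (f θ x) - Real.sqrt (f θ₀ x) - (θ - θ₀) * D x) ^ 2 ∂μ)
        / (θ - θ₀) ^ 2) (𝓝[≠] θ₀) (𝓝 0))
    (hI : 0 < 4 * ∫ x, D x ^ 2 ∂μ)
    (T : X → ℝ) (hT_meas : Measurable T) (M : ℝ) (hT : ∀ᵐ x ∂μ, |T x| ≤ M) :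
    (∫ x, T x ^ 2 * f θ₀ x ∂μ)
      ≥ (2 * ∫ x, D x * Real.sqrt (f θ₀ x) * T x ∂μ) ^ 2
        / (4 * ∫ x, D x ^ 2 ∂μ) :=
  stmt_4_general μ Θ θ₀ hθ₀ f hf_nonneg hf_prob D hD T hT_meas M hT
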